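/- Let 𝓗 be a finite hypergraph on a finite set V with dim(𝓗) ≤ 3, i.e., |H| ≤ 3 for every H ∈ 𝓗. Then 𝓗 is a Tetris hypergraph if and only if 𝓗 satisfies condition (*): for every S ⊆ V with 𝓗_S ≠ ∅ there exists H ∈ 𝓗_S such that H ∩ H' ≠ ∅ for all H' ∈ 𝓗_S. -/

import Mathlib

/-- The minimum excludant of a set of natural numbers. -/
noncomputable def mex (S : Set ℕ) : ℕ := sInf {n : ℕ | n ∉ S}

open Classical in
/-- The Sprague–Grundy function of the impartial game with move relation `move`
(meaningful when every play is finite, i.e. the reversed move relation is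
well-founded): it satisfies `sgFun move x = mex {sgFun move y | move x y}`. -/
noncomputable def sgFun {X : Type*} (move : X → X → Prop) : X → ℕ :=
  if hwf : WellFounded (fun y x => move x y) then
    hwf.fix (fun x ih => mex {v : ℕ | ∃ (y : X) (h : move x y), ih y h = v})
  else fun _ => 0

open Classical in
/-- The Tetris function: the length of a longest play starting at `x`
(meaningful when every play is finite and the game is finitely branching):
it satisfies `tetrisFun move x = sup {tetrisFun move y + 1 | move x y}`. -/
noncomputable def tetrisFun {X : Type*} (move : X → X → Prop) : X → ℕ :=
  if hwf : WellFounded (fun y x => move x y) then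
    hwf.fix (fun x ih => sSup {v : ℕ | ∃ (y : X) (h : move x y), v = ih y h + 1})
  else fun _ => 0

/-- A game is SG decreasing if every move strictly decreases the SG value. -/
def SGDecreasing {X : Type*} (move : X → X → Prop) : Prop :=
  ∀ x y, move x y → sgFun move y < sgFun move x

/-- The move relation of the game `NIM_𝓗` on positions `ℕ^V`. -/
def nimMove {V : Type*} (𝓗 : Set (Finset V)) (x x' : V → ℕ) : Prop :=
  ∃ H ∈ 𝓗, (∀ i ∈ H, x' i < x i) ∧ ∀ i ∉ H, x' i = x i

/-- A hypergraph is Tetris if `NIM_𝓗` is SG decreasing. -/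
def IsTetrisHypergraph {V : Type*} (𝓗 : Set (Finset V)) : Prop :=
  SGDecreasing (nimMove 𝓗)

/-- The move relation of the `𝓗`-combination of the games `move i`. -/
def combMove {V : Type*} {X : V → Type*} (𝓗 : Set (Finset V))
    (move : ∀ i, X i → X i → Prop) (x x' : ∀ i, X i) : Prop :=
  ∃ H ∈ 𝓗, (∀ i ∈ H, move i (x i) (x' i)) ∧ ∀ i ∉ H, x' i = x i

/-- Condition (*): every nonempty induced subhypergraph has a hyperedge
intersecting all its hyperedges. -/
def CondStar {V : Type*} [DecidableEq V] (𝓗 : Set (Finset V)) : Prop :=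
  ∀ S : Finset V, (∃ H ∈ 𝓗, H ⊆ S) →
    ∃ H ∈ 𝓗, H ⊆ S ∧ ∀ H' ∈ 𝓗, H' ⊆ S → (H ∩ H').Nonempty

/-!
The Tetris value `T(x)` of a position (the length of a longest play) is the largest size of a
packing: a multiset of edges using each coordinate `i` at most `x i` times. Hence `T` is
monotone and `T(x) ≤ T(decOn x G) + #G`, so the values reached by moves along an edge `G` fill
the interval `[T(zeroOn x G), T(decOn x G)]`. If every `k < T(x)` is reached by a move, then the
SG function equals `T`, which decreases along moves.

Under (*) and `dim 𝓗 ≤ 3`, a value `k < T(x)` missed by all moves forces `T(x) = 3`, `k = 1`, and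
every supported edge is then either a unit transversal (it meets every supported edge at a
coordinate of value `1`) or the first of three packed edges. A unit transversal meets each edge
of a packing of three edges in exactly one coordinate; chasing these coordinates through the
edges that (*) provides for `supp x` minus one or two unit coordinates yields a contradiction.

Conversely, if (*) fails at `S`, the indicator of `S` has SG value `0` although it has a move.
-/

lemma mex_Iio (n : ℕ) : mex (Set.Iio n) = n := by
  have h : {m : ℕ | m ∉ Set.Iio n} = Set.Ici n := by ext; simp
  rw [mex, h, csInf_Ici]

lemma mex_eq_zero {S : Set ℕ} (h : 0 ∉ S) : mex S = 0 :=
  Nat.eq_zero_of_le_zero (Nat.sInf_le h)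

section Game

variable {X : Type*} {move : X → X → Prop}

lemma sgFun_eq (hwf : WellFounded (fun y x => move x y)) (x : X) :
    sgFun move x = mex {v | ∃ y, move x y ∧ sgFun move y = v} := by
  have hsg : sgFun move = hwf.fix
      (fun x ih => mex {v | ∃ (y : X) (h : move x y), ih y h = v}) := by
    unfold sgFun; rw [dif_pos hwf]
  conv_lhs => rw [hsg, WellFounded.fix_eq]
  simp only [← hsg, exists_prop]

lemma tetrisFun_eq (hwf : WellFounded (fun y x => move x y)) (x : X) :
    tetrisFun move x = sSup {v | ∃ y, move x y ∧ v = tetrisFun move y + 1} := by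
  have ht : tetrisFun move = hwf.fix
      (fun x ih => sSup {v | ∃ (y : X) (h : move x y), v = ih y h + 1}) := by
    unfold tetrisFun; rw [dif_pos hwf]
  conv_lhs => rw [ht, WellFounded.fix_eq]
  simp only [← ht, exists_prop]

lemma sgFun_eq_zero (hwf : WellFounded (fun y x => move x y)) {x : X}
    (h : ∀ y, move x y → sgFun move y ≠ 0) : sgFun move x = 0 := by
  rw [sgFun_eq hwf]
  exact mex_eq_zero fun ⟨y, hy, hy0⟩ => h y hy hy0

lemma bddAbove_tetrisFun_succ (hfin : ∀ x, {y | move x y}.Finite) (x : X) :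
    BddAbove {v | ∃ y, move x y ∧ v = tetrisFun move y + 1} := by
  refine (((hfin x).image fun y => tetrisFun move y + 1).subset ?_).bddAbove
  rintro v ⟨y, hy, rfl⟩
  exact ⟨y, hy, rfl⟩

lemma tetrisFun_lt (hwf : WellFounded (fun y x => move x y))
    (hfin : ∀ x, {y | move x y}.Finite) {x y : X} (h : move x y) :
    tetrisFun move y < tetrisFun move x := by
  rw [tetrisFun_eq hwf x]
  exact Nat.lt_of_succ_le (le_csSup (bddAbove_tetrisFun_succ hfin x) ⟨y, h, rfl⟩)

lemma exists_move_tetrisFun_succ (hwf : WellFounded (fun y x => move x y))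
    (hfin : ∀ x, {y | move x y}.Finite) {x : X} (h : tetrisFun move x ≠ 0) :
    ∃ y, move x y ∧ tetrisFun move x = tetrisFun move y + 1 := by
  rw [tetrisFun_eq hwf x] at h ⊢
  have hne : {v | ∃ y, move x y ∧ v = tetrisFun move y + 1}.Nonempty :=
    Set.nonempty_iff_ne_empty.2 fun he => h (by rw [he, csSup_empty]; rfl)
  exact Nat.sSup_mem hne (bddAbove_tetrisFun_succ hfin x)

theorem sgFun_eq_tetrisFun (hwf : WellFounded (fun y x => move x y))
    (hfin : ∀ x, {y | move x y}.Finite)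
    (hreach : ∀ x k, k < tetrisFun move x → ∃ y, move x y ∧ tetrisFun move y = k) :
    sgFun move = tetrisFun move := by
  funext x
  induction x using hwf.induction with
  | _ x ih =>
    have hopts : {v | ∃ y, move x y ∧ sgFun move y = v} = Set.Iio (tetrisFun move x) := by
      ext v
      constructor
      · rintro ⟨y, hy, rfl⟩
        exact ih y hy ▸ tetrisFun_lt hwf hfin hy
      · intro hv
        obtain ⟨y, hy, rfl⟩ := hreach x v hv
        exact ⟨y, hy, ih y hy⟩
    rw [sgFun_eq hwf, hopts, mex_Iio]

end Game

section Positions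

variable {V : Type*} [DecidableEq V]

lemma nimMove.le {𝓗 : Set (Finset V)} {x y : V → ℕ} (h : nimMove 𝓗 x y) : y ≤ x := by
  obtain ⟨H, -, hlt, heq⟩ := h
  intro i
  by_cases hi : i ∈ H
  · exact (hlt i hi).le
  · exact (heq i hi).le

def zeroOn (x : V → ℕ) (G : Finset V) : V → ℕ := fun i => if i ∈ G then 0 else x i

def decOn (x : V → ℕ) (G : Finset V) : V → ℕ := fun i => if i ∈ G then x i - 1 else x i

lemma zeroOn_le_decOn (x : V → ℕ) (G : Finset V) : zeroOn x G ≤ decOn x G := by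
  intro i; by_cases hi : i ∈ G <;> simp [zeroOn, decOn, hi]

lemma decOn_le (x : V → ℕ) (G : Finset V) : decOn x G ≤ x := by
  intro i; by_cases hi : i ∈ G <;> simp [decOn, hi]

lemma zeroOn_le (x : V → ℕ) (G : Finset V) : zeroOn x G ≤ x :=
  (zeroOn_le_decOn x G).trans (decOn_le x G)

end Positions

section Nim

variable {V : Type*} [Fintype V] {𝓗 : Set (Finset V)}

lemma wellFounded_nimMove (hne : ∀ H ∈ 𝓗, H.Nonempty) :
    WellFounded (fun y x => nimMove 𝓗 x y) := by
  refine Subrelation.wf ?_ (InvImage.wf (fun x : V → ℕ => ∑ i, x i) wellFounded_lt)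
  rintro y x ⟨H, hH, hlt, heq⟩
  obtain ⟨i₀, hi₀⟩ := hne H hH
  refine Finset.sum_lt_sum (fun i _ => ?_) ⟨i₀, Finset.mem_univ _, hlt i₀ hi₀⟩
  by_cases hi : i ∈ H
  · exact (hlt i hi).le
  · exact (heq i hi).le

lemma finite_nimMove (x : V → ℕ) : {y | nimMove 𝓗 x y}.Finite := by
  classical
  exact (Set.finite_Icc 0 x).subset fun _ hy => ⟨fun _ => Nat.zero_le _, nimMove.le hy⟩

variable (𝓗) in
noncomputable abbrev nimTetris : (V → ℕ) → ℕ := tetrisFun (nimMove 𝓗)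

lemma nimTetris_lt (hne : ∀ H ∈ 𝓗, H.Nonempty) {x y : V → ℕ} (h : nimMove 𝓗 x y) :
    nimTetris 𝓗 y < nimTetris 𝓗 x :=
  tetrisFun_lt (wellFounded_nimMove hne) finite_nimMove h

def posSupport (x : V → ℕ) : Finset V := Finset.univ.filter (0 < x ·)

lemma subset_posSupport_iff {x : V → ℕ} {e : Finset V} : e ⊆ posSupport x ↔ ∀ i ∈ e, 0 < x i := by
  simp [Finset.subset_iff, posSupport]

variable [DecidableEq V]

lemma nimMove_of_le_of_le {x y : V → ℕ} {G : Finset V} (hG : G ∈ 𝓗)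
    (hGx : G ⊆ posSupport x) (h₀ : zeroOn x G ≤ y) (h₁ : y ≤ decOn x G) : nimMove 𝓗 x y := by
  refine ⟨G, hG, fun i hi => ?_, fun i hi => ?_⟩
  · have := h₁ i
    have := subset_posSupport_iff.1 hGx i hi
    simp only [decOn, if_pos hi] at *
    omega
  · exact le_antisymm (by simpa [decOn, hi] using h₁ i) (by simpa [zeroOn, hi] using h₀ i)

lemma nimMove_decOn {x : V → ℕ} {G : Finset V} (hG : G ∈ 𝓗) (hGx : G ⊆ posSupport x) :
    nimMove 𝓗 x (decOn x G) :=
  nimMove_of_le_of_le hG hGx (zeroOn_le_decOn x G) le_rfl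

end Nim

section Packing

variable {V : Type*} [DecidableEq V] {𝓗 : Set (Finset V)}

def usage (z : Multiset (Finset V)) (i : V) : ℕ := z.countP (i ∈ ·)

def IsPack (𝓗 : Set (Finset V)) (x : V → ℕ) (z : Multiset (Finset V)) : Prop :=
  (∀ e ∈ z, e ∈ 𝓗) ∧ ∀ i, usage z i ≤ x i

lemma usage_cons (e : Finset V) (z : Multiset (Finset V)) (i : V) :
    usage (e ::ₘ z) i = usage z i + if i ∈ e then 1 else 0 := by
  simp [usage, Multiset.countP_cons]

lemma usage_pos_iff {z : Multiset (Finset V)} {i : V} : 0 < usage z i ↔ ∃ e ∈ z, i ∈ e := by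
  simp [usage, Multiset.countP_pos]

lemma usage_erase {z : Multiset (Finset V)} {e : Finset V} (he : e ∈ z) (i : V) :
    usage (z.erase e) i + (if i ∈ e then 1 else 0) = usage z i := by
  conv_rhs => rw [← Multiset.cons_erase he, usage_cons]

lemma usage_le_usage {z z' : Multiset (Finset V)} (h : z' ≤ z) (i : V) :
    usage z' i ≤ usage z i :=
  Multiset.countP_le_of_le _ h

lemma sum_usage (A : Finset V) (z : Multiset (Finset V)) :
    ∑ a ∈ A, usage z a = (z.map fun e => (A ∩ e).card).sum := by
  induction z using Multiset.induction_on with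
  | empty => simp [usage]
  | cons e z ih =>
    simp only [usage_cons, Finset.sum_add_distrib, ih, Multiset.map_cons, Multiset.sum_cons,
      Finset.sum_boole, Finset.filter_mem_eq_inter, Nat.cast_id]
    ring

lemma IsPack.mono {x x' : V → ℕ} {z : Multiset (Finset V)} (h : IsPack 𝓗 x z) (hx : x ≤ x') :
    IsPack 𝓗 x' z :=
  ⟨h.1, fun i => (h.2 i).trans (hx i)⟩

lemma IsPack.of_le {x : V → ℕ} {z z' : Multiset (Finset V)} (h : IsPack 𝓗 x z) (hz : z' ≤ z) :
    IsPack 𝓗 x z' :=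
  ⟨fun e he => h.1 e (Multiset.mem_of_le hz he), fun i => (usage_le_usage hz i).trans (h.2 i)⟩

lemma IsPack.decOn_of_cons {x : V → ℕ} {e : Finset V} {z : Multiset (Finset V)}
    (h : IsPack 𝓗 x (e ::ₘ z)) : IsPack 𝓗 (decOn x e) z := by
  refine ⟨fun e' he' => h.1 e' (Multiset.mem_cons_of_mem he'), fun i => ?_⟩
  have := h.2 i
  rw [usage_cons] at this
  by_cases hi : i ∈ e <;> simp only [decOn, hi, if_true, if_false] at this ⊢ <;> omega

lemma IsPack.cons {x y : V → ℕ} {e : Finset V} {z : Multiset (Finset V)} (h : IsPack 𝓗 y z)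
    (he : e ∈ 𝓗) (hlt : ∀ i ∈ e, y i < x i) (heq : ∀ i ∉ e, y i = x i) :
    IsPack 𝓗 x (e ::ₘ z) := by
  refine ⟨fun e' he' => (Multiset.mem_cons.1 he').elim (· ▸ he) (h.1 e'), fun i => ?_⟩
  have := h.2 i
  rw [usage_cons]
  by_cases hi : i ∈ e
  · have := hlt i hi; simp only [hi, if_true]; omega
  · have := heq i hi; simp only [hi, if_false]; omega

end Packing

section NimTetris

variable {V : Type*} [Fintype V] [DecidableEq V] {𝓗 : Set (Finset V)}

lemma IsPack.subset_posSupport {x : V → ℕ} {z : Multiset (Finset V)} (h : IsPack 𝓗 x z)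
    {e : Finset V} (he : e ∈ z) : e ⊆ posSupport x :=
  subset_posSupport_iff.2 fun i hi => (usage_pos_iff.2 ⟨e, he, hi⟩).trans_le (h.2 i)

def IsSupportTransversal (𝓗 : Set (Finset V)) (x : V → ℕ) (H : Finset V) : Prop :=
  ∀ e ∈ 𝓗, e ⊆ posSupport x → (H ∩ e).Nonempty

lemma isPack_singleton {x : V → ℕ} {e : Finset V} (he : e ∈ 𝓗) (hex : e ⊆ posSupport x) :
    IsPack 𝓗 x {e} := by
  refine ⟨by simpa using he, fun i => ?_⟩
  change usage (e ::ₘ 0) i ≤ x i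
  rw [usage_cons, show usage 0 i = 0 from rfl, zero_add]
  split_ifs with hi
  · exact subset_posSupport_iff.1 hex i hi
  · exact Nat.zero_le _

variable (hne : ∀ H ∈ 𝓗, H.Nonempty)
include hne

lemma IsPack.card_le_nimTetris {x : V → ℕ} {z : Multiset (Finset V)} (h : IsPack 𝓗 x z) :
    z.card ≤ nimTetris 𝓗 x := by
  induction z using Multiset.induction_on generalizing x with
  | empty => simp
  | cons e z ih =>
    have hmove := nimMove_decOn (h.1 e (Multiset.mem_cons_self e z))
      (h.subset_posSupport (Multiset.mem_cons_self e z))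
    rw [Multiset.card_cons]
    exact (Nat.add_le_add_right (ih h.decOn_of_cons) 1).trans (nimTetris_lt hne hmove)

lemma exists_isPack_card_eq (x : V → ℕ) :
    ∃ z, IsPack 𝓗 x z ∧ z.card = nimTetris 𝓗 x := by
  induction h : nimTetris 𝓗 x generalizing x with
  | zero => exact ⟨0, ⟨by simp, fun i => by simp [usage]⟩, rfl⟩
  | succ n ih =>
    change tetrisFun (nimMove 𝓗) x = n + 1 at h
    obtain ⟨y, ⟨H, hH, hlt, heq⟩, hy⟩ := exists_move_tetrisFun_succ (wellFounded_nimMove hne)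
      finite_nimMove (ne_of_eq_of_ne h n.succ_ne_zero)
    obtain ⟨z, hz, hzc⟩ := ih y (show tetrisFun (nimMove 𝓗) y = n by omega)
    exact ⟨H ::ₘ z, hz.cons hH hlt heq, by simp [hzc]⟩

lemma nimTetris_mono : Monotone (nimTetris 𝓗) := fun x _ hxy =>
  let ⟨_, hz, hzc⟩ := exists_isPack_card_eq hne x
  hzc ▸ (hz.mono hxy).card_le_nimTetris hne

lemma nimTetris_pos_iff {x : V → ℕ} : 0 < nimTetris 𝓗 x ↔ ∃ e ∈ 𝓗, e ⊆ posSupport x := by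
  constructor
  · intro hx
    obtain ⟨z, hz, hzc⟩ := exists_isPack_card_eq hne x
    obtain ⟨e, he⟩ := Multiset.card_pos_iff_exists_mem.1 (hzc ▸ hx)
    exact ⟨e, hz.1 e he, hz.subset_posSupport he⟩
  · rintro ⟨e, he, hex⟩
    exact (isPack_singleton he hex).card_le_nimTetris hne

lemma card_le_nimTetris_add_card (J : Finset V) {z : Multiset (Finset V)}
    (hz : ∀ e ∈ z, e ∈ 𝓗) {c : V → ℕ} (hc : ∀ i, usage z i ≤ c i + if i ∈ J then 1 else 0) :
    z.card ≤ nimTetris 𝓗 c + J.card := by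
  induction J using Finset.induction_on generalizing z with
  | empty => simpa using IsPack.card_le_nimTetris hne ⟨hz, fun i => by simpa using hc i⟩
  | @insert j J hj ih =>
    rw [Finset.card_insert_of_notMem hj]
    by_cases hfull : usage z j ≤ c j
    · refine (ih hz fun i => ?_).trans (by omega)
      by_cases hij : i = j
      · subst hij; simp only [hj, if_false]; omega
      · simpa [hij] using hc i
    · obtain ⟨e, he, hje⟩ := usage_pos_iff.1 (by omega : 0 < usage z j)
      have hz' : ∀ e' ∈ z.erase e, e' ∈ 𝓗 := fun e' he' => hz e' (Multiset.mem_of_mem_erase he')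
      refine (Multiset.card_erase_add_one he).symm.le.trans
        (Nat.add_le_add_right (ih hz' fun i => ?_) 1 |>.trans (by omega))
      have h₁ := usage_erase he i
      have h₂ := hc i
      by_cases hij : i = j
      · subst hij; simp only [hje, hj, Finset.mem_insert, true_or, if_true, if_false] at *
        omega
      · by_cases hiJ : i ∈ J <;> simp only [hij, hiJ, Finset.mem_insert, false_or, if_true,
          if_false] at * <;> split_ifs at h₁ <;> omega

lemma nimTetris_le_decOn_add_card (x : V → ℕ) (G : Finset V) :
    nimTetris 𝓗 x ≤ nimTetris 𝓗 (decOn x G) + G.card := by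
  obtain ⟨z, hz, hzc⟩ := exists_isPack_card_eq hne x
  refine hzc ▸ card_le_nimTetris_add_card hne G hz.1 fun i => ?_
  have := hz.2 i
  by_cases hi : i ∈ G <;> simp only [decOn, hi, if_true, if_false] <;> omega

lemma nimTetris_le_sum {y : V → ℕ} {A : Finset V} (hA : IsSupportTransversal 𝓗 y A) :
    nimTetris 𝓗 y ≤ ∑ a ∈ A, y a := by
  obtain ⟨z, hz, hzc⟩ := exists_isPack_card_eq hne y
  have hmeet : ∀ n ∈ z.map fun e => (A ∩ e).card, 1 ≤ n := by
    simp only [Multiset.mem_map]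
    rintro n ⟨e, he, rfl⟩
    exact Finset.card_pos.2 (hA e (hz.1 e he) (hz.subset_posSupport he))
  calc nimTetris 𝓗 y = z.card := hzc.symm
    _ ≤ (z.map fun e => (A ∩ e).card).sum := by
      simpa using Multiset.card_nsmul_le_sum hmeet
    _ = ∑ a ∈ A, usage z a := (sum_usage A z).symm
    _ ≤ ∑ a ∈ A, y a := Finset.sum_le_sum fun a _ => hz.2 a

end NimTetris

section Intermediate

variable {V : Type*} [Fintype V] [DecidableEq V] {𝓗 : Set (Finset V)}

lemma exists_nimTetris_eq_of_le (hne : ∀ H ∈ 𝓗, H.Nonempty) {y y' : V → ℕ} (hle : y ≤ y')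
    {k : ℕ} (hk : nimTetris 𝓗 y ≤ k) (hk' : k ≤ nimTetris 𝓗 y') :
    ∃ y'', y ≤ y'' ∧ y'' ≤ y' ∧ nimTetris 𝓗 y'' = k := by
  induction hs : ∑ i, y' i using Nat.strong_induction_on generalizing y' with
  | _ n ih =>
    rcases hk'.eq_or_lt with rfl | hlt
    · exact ⟨y', hle, le_rfl, rfl⟩
    obtain ⟨j, hj⟩ : ∃ j, y j < y' j :=
      (Pi.lt_def.1 (hle.lt_of_ne fun h => by rw [h] at hk; omega)).2
    set y'' := decOn y' {j}
    have hle'' : y ≤ y'' := by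
      intro i
      by_cases hij : i = j
      · subst hij; simp only [y'', decOn, Finset.mem_singleton, if_true]; omega
      · simpa [y'', decOn, hij] using hle i
    have hsum : ∑ i, y'' i < n := hs ▸ Finset.sum_lt_sum (fun i _ => decOn_le y' {j} i)
      ⟨j, Finset.mem_univ j, by simp only [y'', decOn, Finset.mem_singleton, if_true]; omega⟩
    have hlip : nimTetris 𝓗 y' ≤ nimTetris 𝓗 y'' + 1 := by
      simpa using nimTetris_le_decOn_add_card hne y' {j}
    obtain ⟨y₀, h₀, h₀', hy₀⟩ := ih _ hsum hle'' (by omega) rfl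
    exact ⟨y₀, h₀, h₀'.trans (decOn_le y' {j}), hy₀⟩

lemma exists_nimMove_nimTetris_eq_of_le_of_le (hne : ∀ H ∈ 𝓗, H.Nonempty) {x : V → ℕ}
    {G : Finset V} (hG : G ∈ 𝓗) (hGx : G ⊆ posSupport x) {k : ℕ}
    (hk : nimTetris 𝓗 (zeroOn x G) ≤ k) (hk' : k ≤ nimTetris 𝓗 (decOn x G)) :
    ∃ y, nimMove 𝓗 x y ∧ nimTetris 𝓗 y = k :=
  let ⟨y, h₀, h₁, hy⟩ := exists_nimTetris_eq_of_le hne (zeroOn_le_decOn x G) hk hk'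
  ⟨y, nimMove_of_le_of_le hG hGx h₀ h₁, hy⟩

end Intermediate

section Gap

variable {V : Type*} [Fintype V] [DecidableEq V] {𝓗 : Set (Finset V)}

lemma IsSupportTransversal.mono {x y : V → ℕ} {H : Finset V}
    (hH : IsSupportTransversal 𝓗 x H) (hyx : y ≤ x) : IsSupportTransversal 𝓗 y H :=
  fun e he hey => hH e he (hey.trans fun i hi => by
    simp only [posSupport, Finset.mem_filter, Finset.mem_univ, true_and] at hi ⊢
    exact hi.trans_le (hyx i))

variable (hne : ∀ H ∈ 𝓗, H.Nonempty)
include hne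

lemma nimTetris_zeroOn_eq_zero {x : V → ℕ} {H : Finset V} (hH : IsSupportTransversal 𝓗 x H) :
    nimTetris 𝓗 (zeroOn x H) = 0 := by
  have := nimTetris_le_sum hne (hH.mono (zeroOn_le x H))
  rwa [Finset.sum_eq_zero fun a ha => by simp [zeroOn, ha], Nat.le_zero] at this

lemma nimTetris_decOn_add_one {x : V → ℕ} {z : Multiset (Finset V)} (hz : IsPack 𝓗 x z)
    (hzc : z.card = nimTetris 𝓗 x) {e : Finset V} (he : e ∈ z) :
    nimTetris 𝓗 (decOn x e) + 1 = nimTetris 𝓗 x := by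
  have hlt := nimTetris_lt hne (nimMove_decOn (hz.1 e he) (hz.subset_posSupport he))
  have hge := ((Multiset.cons_erase he ▸ hz).decOn_of_cons).card_le_nimTetris hne
  have := Multiset.card_erase_add_one he
  omega

lemma card_le_nimTetris_decOn_add_card {x : V → ℕ} {H J : Finset V} (hJ : J ⊆ H)
    (hHx : H ⊆ posSupport x) {z : Multiset (Finset V)} (hz : ∀ e ∈ z, e ∈ 𝓗)
    (hu : ∀ i, usage z i + (if i ∈ H \ J then 1 else 0) ≤ x i) :
    z.card ≤ nimTetris 𝓗 (decOn x H) + J.card := by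
  refine card_le_nimTetris_add_card hne J hz fun i => ?_
  have := hu i
  by_cases hiH : i ∈ H
  · have := subset_posSupport_iff.1 hHx i hiH
    by_cases hiJ : i ∈ J <;> simp only [decOn, hiH, hiJ, Finset.mem_sdiff, if_true, if_false,
      true_and, not_true, not_false_eq_true] at * <;> omega
  · have hiJ : i ∉ J := fun h => hiH (hJ h)
    simp only [decOn, hiH, hiJ, Finset.mem_sdiff, false_and, if_false] at *
    omega

variable {x : V → ℕ} {H : Finset V} (hH : IsSupportTransversal 𝓗 x H) (hHx : H ⊆ posSupport x)
  (htight : nimTetris 𝓗 x = nimTetris 𝓗 (decOn x H) + H.card)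
  {z : Multiset (Finset V)} (hz : IsPack 𝓗 x z) (hzc : z.card = nimTetris 𝓗 x)
include hH hHx htight hz hzc

lemma card_inter_eq_one_of_tight {e : Finset V} (he : e ∈ z) : (H ∩ e).card = 1 := by
  have hpos := Finset.card_pos.2 (hH e (hz.1 e he) (hz.subset_posSupport he))
  by_contra hcard
  have hle := card_le_nimTetris_decOn_add_card hne (J := H \ e) Finset.sdiff_subset hHx
    (fun e' he' => hz.1 e' (Multiset.mem_of_mem_erase he')) (z := z.erase e) fun i => by
      have h₁ := usage_erase he i
      have h₂ := hz.2 i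
      have : (if i ∈ H \ (H \ e) then 1 else 0) ≤ if i ∈ e then 1 else 0 := by
        split_ifs <;> simp_all
      omega
  have := Multiset.card_erase_add_one he
  have := Finset.card_sdiff_add_card_inter H e
  omega

omit hH in
lemma usage_eq_of_tight {h : V} (hh : h ∈ H) : usage z h = x h := by
  refine le_antisymm (hz.2 h) (not_lt.1 fun hlt => ?_)
  have hle := card_le_nimTetris_decOn_add_card hne (Finset.erase_subset h H) hHx hz.1 fun i => by
    have := hz.2 i
    by_cases hi : i = h
    · subst hi; rw [if_pos (by simp [hh])]; omega
    · rw [if_neg (by simp [hi])]; omega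
  have := Finset.card_erase_add_one hh
  omega

lemma nimTetris_eq_sum_of_tight : nimTetris 𝓗 x = ∑ h ∈ H, x h := by
  calc nimTetris 𝓗 x = z.card := hzc.symm
    _ = (z.map fun e => (H ∩ e).card).sum := by
      rw [Multiset.map_congr rfl fun e he => card_inter_eq_one_of_tight hne hH hHx htight hz hzc he]
      simp
    _ = ∑ h ∈ H, usage z h := (sum_usage H z).symm
    _ = ∑ h ∈ H, x h := Finset.sum_congr rfl fun h hh => usage_eq_of_tight hne hHx htight hz hzc hh

/-- Zeroing the packing edge through `h`, which meets `H` only at `h`, lowers the bound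
`∑_{a ∈ H} x a` of `nimTetris_le_sum` by `x h`. -/
lemma le_one_of_tight (hzero : ∀ e ∈ z, nimTetris 𝓗 x ≤ nimTetris 𝓗 (zeroOn x e) + 1)
    {h : V} (hh : h ∈ H) : x h ≤ 1 := by
  have hxh := subset_posSupport_iff.1 hHx h hh
  obtain ⟨e, he, hhe⟩ := usage_pos_iff.1 ((usage_eq_of_tight hne hHx htight hz hzc hh).symm ▸ hxh)
  have hHe : ∀ a ∈ H, a ∈ e → a = h := fun a ha hae =>
    Finset.card_le_one.1 (card_inter_eq_one_of_tight hne hH hHx htight hz hzc he).le a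
      (Finset.mem_inter.2 ⟨ha, hae⟩) h (Finset.mem_inter.2 ⟨hh, hhe⟩)
  have hbound : nimTetris 𝓗 (zeroOn x e) ≤ ∑ a ∈ H.erase h, zeroOn x e a := by
    refine nimTetris_le_sum hne fun e' he' he'x => ?_
    obtain ⟨a, ha⟩ := (hH.mono (zeroOn_le x e)) e' he' he'x
    obtain ⟨haH, hae'⟩ := Finset.mem_inter.1 ha
    refine ⟨a, Finset.mem_inter.2 ⟨Finset.mem_erase.2 ⟨fun hah => ?_, haH⟩, hae'⟩⟩
    have := subset_posSupport_iff.1 he'x a hae'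
    simp [zeroOn, hah ▸ hhe] at this
  have hsum : ∑ a ∈ H.erase h, zeroOn x e a = ∑ a ∈ H.erase h, x a :=
    Finset.sum_congr rfl fun a ha => by
      have : a ∉ e := fun hae => (Finset.mem_erase.1 ha).1 (hHe a (Finset.mem_erase.1 ha).2 hae)
      simp [zeroOn, this]
  have := Finset.add_sum_erase H x hh
  have := nimTetris_eq_sum_of_tight hne hH hHx htight hz hzc
  have := hzero e he
  omega

end Gap

section Reduction

variable {V : Type*} [Fintype V] [DecidableEq V] {𝓗 : Set (Finset V)}

def IsUnitTransversal (𝓗 : Set (Finset V)) (x : V → ℕ) (F : Finset V) : Prop :=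
  ∀ e ∈ 𝓗, e ⊆ posSupport x → ∃ a ∈ F, a ∈ e ∧ x a = 1

variable (hne : ∀ H ∈ 𝓗, H.Nonempty)
include hne

lemma isUnitTransversal_of_nimTetris_decOn_eq_zero {x : V → ℕ} {F : Finset V}
    (h : nimTetris 𝓗 (decOn x F) = 0) : IsUnitTransversal 𝓗 x F := by
  intro e he hex
  by_contra hno
  push Not at hno
  refine ((nimTetris_pos_iff hne).2 ⟨e, he, subset_posSupport_iff.2 fun i hi => ?_⟩).ne' h
  have := subset_posSupport_iff.1 hex i hi
  by_cases hiF : i ∈ F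
  · have := hno i hiF hi
    simp only [decOn, hiF, if_true]
    omega
  · simpa [decOn, hiF]

lemma exists_isPack_triple_of_two_le {x : V → ℕ} {e : Finset V} (he : e ∈ 𝓗)
    (hex : e ⊆ posSupport x) (h2 : 2 ≤ nimTetris 𝓗 (zeroOn x e)) :
    ∃ p q, IsPack 𝓗 x {e, p, q} ∧ Disjoint e p ∧ Disjoint e q := by
  obtain ⟨w, hw, hwc⟩ := exists_isPack_card_eq hne (zeroOn x e)
  obtain ⟨p, hp⟩ := Multiset.card_pos_iff_exists_mem.1 (by omega : 0 < w.card)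
  obtain ⟨w', rfl⟩ := Multiset.exists_cons_of_mem hp
  rw [Multiset.card_cons] at hwc
  obtain ⟨q, hq⟩ := Multiset.card_pos_iff_exists_mem.1 (by omega : 0 < w'.card)
  obtain ⟨w'', rfl⟩ := Multiset.exists_cons_of_mem hq
  have hpq : IsPack 𝓗 (zeroOn x e) {p, q} :=
    hw.of_le (Multiset.cons_le_cons p (Multiset.cons_le_cons q (Multiset.zero_le w'')))
  have hdisj : ∀ r ∈ ({p, q} : Multiset (Finset V)), Disjoint e r := fun r hr =>
    Finset.disjoint_left.2 fun i hie hir => by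
      simpa [zeroOn, hie] using subset_posSupport_iff.1 (hpq.subset_posSupport hr) i hir
  refine ⟨p, q, hpq.cons he (fun i hi => ?_) (fun i hi => by simp [zeroOn, hi]),
    hdisj p (by simp), hdisj q (by simp)⟩
  simpa [zeroOn, hi] using subset_posSupport_iff.1 hex i hi

/-- A transversal `H` given by (*) has `T(zeroOn x H) = 0`, so the moves along `H` cover
`[0, T(decOn x H)]`, while a packing edge covers `[T(zeroOn x e), T(x) - 1]`; the gap left
forces `H` to be tight, and then `T(x) = ∑_{h ∈ H} x h` with all `x h = 1`. -/
theorem nimTetris_eq_three_of_gap (hdim : ∀ H ∈ 𝓗, H.card ≤ 3) (hstar : CondStar 𝓗)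
    {x : V → ℕ} {k : ℕ} (hk : k < nimTetris 𝓗 x)
    (hgap : ∀ e ∈ 𝓗, e ⊆ posSupport x →
      k < nimTetris 𝓗 (zeroOn x e) ∨ nimTetris 𝓗 (decOn x e) < k) :
    nimTetris 𝓗 x = 3 ∧ k = 1 := by
  obtain ⟨H, hH, hHx, hHt⟩ := hstar (posSupport x) ((nimTetris_pos_iff hne).1 (by omega))
  have hHlo : nimTetris 𝓗 (decOn x H) < k :=
    (hgap H hH hHx).resolve_left (by rw [nimTetris_zeroOn_eq_zero hne hHt]; omega)
  obtain ⟨z, hz, hzc⟩ := exists_isPack_card_eq hne x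
  have hzero : ∀ e ∈ z, k < nimTetris 𝓗 (zeroOn x e) := fun e he =>
    (hgap e (hz.1 e he) (hz.subset_posSupport he)).resolve_right
      (by have := nimTetris_decOn_add_one hne hz hzc he; omega)
  obtain ⟨e, he⟩ := Multiset.card_pos_iff_exists_mem.1 (hzc ▸ (by omega : 0 < nimTetris 𝓗 x))
  have := nimTetris_mono hne (zeroOn_le_decOn x e)
  have := nimTetris_decOn_add_one hne hz hzc he
  have := hzero e he
  have hlip := nimTetris_le_decOn_add_card hne x H
  have := hdim H hH
  have htight : nimTetris 𝓗 x = nimTetris 𝓗 (decOn x H) + H.card := by omega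
  have hone : ∀ h ∈ H, x h = 1 := fun h hh => le_antisymm
    (le_one_of_tight hne hHt hHx htight hz hzc (fun e he => by have := hzero e he; omega) hh)
    (subset_posSupport_iff.1 hHx h hh)
  have hsum := nimTetris_eq_sum_of_tight hne hHt hHx htight hz hzc
  rw [Finset.sum_congr rfl hone, Finset.sum_const, smul_eq_mul, mul_one] at hsum
  omega

end Reduction

section Triple

variable {V : Type*} [DecidableEq V] {𝓗 : Set (Finset V)} {x : V → ℕ} {w₁ w₂ w₃ : Finset V}
  {a : V}

lemma IsPack.swap₁₂ (h : IsPack 𝓗 x {w₁, w₂, w₃}) : IsPack 𝓗 x {w₂, w₁, w₃} := by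
  rwa [Multiset.insert_eq_cons, Multiset.insert_eq_cons, Multiset.cons_swap] at h

lemma IsPack.swap₂₃ (h : IsPack 𝓗 x {w₁, w₂, w₃}) : IsPack 𝓗 x {w₁, w₃, w₂} := by
  rwa [Multiset.pair_comm] at h

lemma IsPack.ne_one₁₂ (h : IsPack 𝓗 x {w₁, w₂, w₃}) (h₁ : a ∈ w₁) (h₂ : a ∈ w₂) : x a ≠ 1 := by
  have := h.2 a
  simp only [Multiset.insert_eq_cons, usage_cons, h₁, h₂, if_true] at this
  omega

lemma IsPack.ne_one₁₃ (h : IsPack 𝓗 x {w₁, w₂, w₃}) (h₁ : a ∈ w₁) (h₃ : a ∈ w₃) : x a ≠ 1 :=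
  h.swap₂₃.ne_one₁₂ h₁ h₃

lemma IsPack.ne_one₂₃ (h : IsPack 𝓗 x {w₁, w₂, w₃}) (h₂ : a ∈ w₂) (h₃ : a ∈ w₃) : x a ≠ 1 :=
  h.swap₁₂.ne_one₁₃ h₂ h₃

end Triple

section UnitTransversal

variable {V : Type*} [Fintype V] [DecidableEq V] {𝓗 : Set (Finset V)} {x : V → ℕ}
  {w₁ w₂ w₃ : Finset V} {a : V}

lemma IsPack.subset_posSupport_sdiff (hM : IsPack 𝓗 x {w₁, w₂, w₃}) {D : Finset V}
    (hD : ∀ a ∈ D, a ∈ w₁ ∧ x a = 1) : w₂ ⊆ posSupport x \ D :=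
  Finset.subset_sdiff.2 ⟨hM.subset_posSupport (by simp),
    Finset.disjoint_right.2 fun _ haD haw => hM.ne_one₁₂ (hD _ haD).1 haw (hD _ haD).2⟩

/-- Double counting `∑_{w ∈ z} #(U ∩ w) = ∑_{a ∈ U} usage z a ≤ #U` for the unit coordinates
`U` of `F`, where every term on the left is at least `1`. -/
lemma IsUnitTransversal.unit_and_card_inter {F : Finset V} (hF : IsUnitTransversal 𝓗 x F)
    {z : Multiset (Finset V)} (hz : IsPack 𝓗 x z) (hcard : F.card ≤ z.card) :
    (∀ a ∈ F, x a = 1 ∧ usage z a = 1) ∧ ∀ w ∈ z, (F ∩ w).card = 1 := by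
  set U := F.filter (x · = 1)
  have hmeet : ∀ w ∈ z, 1 ≤ (U ∩ w).card := fun w hw => by
    obtain ⟨a, haF, haw, hax⟩ := hF w (hz.1 w hw) (hz.subset_posSupport hw)
    exact Finset.card_pos.2 ⟨a, Finset.mem_inter.2 ⟨Finset.mem_filter.2 ⟨haF, hax⟩, haw⟩⟩
  have hle : ∀ a ∈ U, usage z a ≤ 1 := fun a ha => (hz.2 a).trans_eq (Finset.mem_filter.1 ha).2
  have hlow : z.card ≤ ∑ a ∈ U, usage z a := by
    rw [sum_usage]
    simpa using Multiset.card_nsmul_le_sum (s := z.map fun w => (U ∩ w).card) (a := 1)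
      (by simpa using hmeet)
  have hup : ∑ a ∈ U, usage z a ≤ U.card := by simpa using Finset.sum_le_sum hle
  have hUF : U = F := Finset.eq_of_subset_of_card_le (Finset.filter_subset _ F)
    (by have := Finset.card_filter_le F (x · = 1); omega)
  rw [hUF] at hmeet hle hlow hup
  have husage : ∀ a ∈ F, usage z a = 1 :=
    (Finset.sum_eq_sum_iff_of_le hle).1 (by
      simp only [Finset.sum_const, smul_eq_mul, mul_one]; omega)
  refine ⟨fun a ha => ⟨(Finset.mem_filter.1 (hUF ▸ ha : a ∈ U)).2, husage a ha⟩, fun w hw => ?_⟩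
  obtain ⟨z', rfl⟩ := Multiset.exists_cons_of_mem hw
  have hrest := Multiset.card_nsmul_le_sum (s := z'.map fun w => (F ∩ w).card) (a := 1)
    (by simpa using fun w hw => hmeet w (Multiset.mem_cons_of_mem hw))
  rw [sum_usage] at hup
  simp only [Multiset.map_cons, Multiset.sum_cons, Multiset.card_map, smul_eq_mul, mul_one,
    Multiset.card_cons] at hup hrest hcard
  have := hmeet w hw
  omega

variable {F : Finset V} (hF : IsUnitTransversal 𝓗 x F) (hF3 : F.card ≤ 3)
  (hM : IsPack 𝓗 x {w₁, w₂, w₃})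
include hF hF3 hM

lemma IsUnitTransversal.unit (ha : a ∈ F) : x a = 1 :=
  ((hF.unit_and_card_inter hM hF3).1 a ha).1

lemma IsUnitTransversal.subset_posSupport : F ⊆ posSupport x :=
  subset_posSupport_iff.2 fun _ ha => (hF.unit hF3 hM ha).symm ▸ Nat.one_pos

lemma IsUnitTransversal.mem_triple (ha : a ∈ F) : a ∈ w₁ ∨ a ∈ w₂ ∨ a ∈ w₃ := by
  obtain ⟨w, hw, haw⟩ :=
    usage_pos_iff.1 (((hF.unit_and_card_inter hM hF3).1 a ha).2 ▸ Nat.one_pos)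
  simp only [Multiset.insert_eq_cons, Multiset.mem_cons, Multiset.mem_singleton] at hw
  rcases hw with rfl | rfl | rfl <;> simp [haw]

lemma IsUnitTransversal.eq_of_mem {w : Finset V} (hw : w ∈ ({w₁, w₂, w₃} : Multiset _))
    {b : V} (ha : a ∈ F) (hb : b ∈ F) (haw : a ∈ w) (hbw : b ∈ w) : a = b :=
  Finset.card_le_one.1 ((hF.unit_and_card_inter hM hF3).2 w hw).le a
    (Finset.mem_inter.2 ⟨ha, haw⟩) b (Finset.mem_inter.2 ⟨hb, hbw⟩)

lemma IsUnitTransversal.eq_or_eq_or_eq {c₁ c₂ c₃ : V} (hc₁ : c₁ ∈ F ∧ c₁ ∈ w₁)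
    (hc₂ : c₂ ∈ F ∧ c₂ ∈ w₂) (hc₃ : c₃ ∈ F ∧ c₃ ∈ w₃) (ha : a ∈ F) : a = c₁ ∨ a = c₂ ∨ a = c₃ :=
  (hF.mem_triple hF3 hM ha).imp (hF.eq_of_mem hF3 hM (by simp) ha hc₁.1 · hc₁.2) <|
    Or.imp (hF.eq_of_mem hF3 hM (by simp) ha hc₂.1 · hc₂.2)
      (hF.eq_of_mem hF3 hM (by simp) ha hc₃.1 · hc₃.2)

omit hF3 in
lemma IsUnitTransversal.exists_mem {w : Finset V} (hw : w ∈ ({w₁, w₂, w₃} : Multiset _)) :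
    ∃ a ∈ F, a ∈ w :=
  let ⟨b, hb, hbw, _⟩ := hF w (hM.1 w hw) (hM.subset_posSupport hw)
  ⟨b, hb, hbw⟩

end UnitTransversal

section Endgame

variable {V : Type*} [Fintype V] [DecidableEq V] {𝓗 : Set (Finset V)} {x : V → ℕ}
  {w₁ w₂ w₃ : Finset V} {h₁ h₂ h₃ : V}

/-- Each `aᵢ` shares an edge of one packing with each `bⱼ`, so they coincide if both lie in `G`,
and then the common coordinate lies in two edges of the other packing. -/
lemma IsUnitTransversal.false_of_square {G : Finset V} (hG : IsUnitTransversal 𝓗 x G)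
    (hG3 : G.card ≤ 3) {m₁ m₂ m₃ q₁ q₂ q₃ : Finset V} (hM : IsPack 𝓗 x {m₁, m₂, m₃})
    (hQ : IsPack 𝓗 x {q₁, q₂, q₃}) {a₁ a₂ b₁ b₂ : V} (ha₁ : a₁ ∈ m₁ ∧ a₁ ∈ q₂)
    (ha₂ : a₂ ∈ m₂ ∧ a₂ ∈ q₃) (hb₁ : b₁ ∈ m₁ ∧ b₁ ∈ q₃) (hb₂ : b₂ ∈ m₂ ∧ b₂ ∈ q₂)
    (ha : a₁ ∈ G ∨ a₂ ∈ G) (hb : b₁ ∈ G ∨ b₂ ∈ G) : False := by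
  rcases ha with ha | ha <;> rcases hb with hb | hb
  · obtain rfl := hG.eq_of_mem hG3 hM (by simp) ha hb ha₁.1 hb₁.1
    exact hQ.ne_one₂₃ ha₁.2 hb₁.2 (hG.unit hG3 hM ha)
  · obtain rfl := hG.eq_of_mem hG3 hQ (by simp) ha hb ha₁.2 hb₂.2
    exact hM.ne_one₁₂ ha₁.1 hb₂.1 (hG.unit hG3 hM ha)
  · obtain rfl := hG.eq_of_mem hG3 hQ (by simp) ha hb ha₂.2 hb₁.2
    exact hM.ne_one₁₂ hb₁.1 ha₂.1 (hG.unit hG3 hM ha)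
  · obtain rfl := hG.eq_of_mem hG3 hM (by simp) ha hb ha₂.1 hb₂.1
    exact hQ.ne_one₂₃ hb₂.2 ha₂.2 (hG.unit hG3 hM ha)

/-- What a move value missing at a position of Tetris value `3` leaves behind
(see `nimTetris_eq_three_of_gap`). -/
structure IsCritical (𝓗 : Set (Finset V)) (x : V → ℕ) : Prop where
  card_le : ∀ H ∈ 𝓗, H.card ≤ 3
  condStar : CondStar 𝓗
  dichotomy : ∀ e ∈ 𝓗, e ⊆ posSupport x →
    IsUnitTransversal 𝓗 x e ∨ ∃ p q, IsPack 𝓗 x {e, p, q} ∧ Disjoint e p ∧ Disjoint e q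

lemma IsCritical.exists_witness (hx : IsCritical 𝓗 x) {D : Finset V}
    (hD : ∃ e ∈ 𝓗, e ⊆ posSupport x \ D) :
    ∃ W ∈ 𝓗, W ⊆ posSupport x \ D ∧ (IsUnitTransversal 𝓗 x W ∨
      ∃ p q, IsPack 𝓗 x {W, p, q} ∧ (p ∩ D).Nonempty ∧ (q ∩ D).Nonempty) := by
  obtain ⟨W, hW, hWx, hWt⟩ := hx.condStar _ hD
  refine ⟨W, hW, hWx, (hx.dichotomy W hW (hWx.trans Finset.sdiff_subset)).imp_right ?_⟩
  rintro ⟨p, q, hQ, hWp, hWq⟩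
  have hmeet : ∀ r ∈ ({W, p, q} : Multiset (Finset V)), Disjoint W r → (r ∩ D).Nonempty := by
    intro r hr hWr
    by_contra hrD
    refine Finset.not_disjoint_iff_nonempty_inter.2 (hWt r (hQ.1 r hr) fun i hi => ?_) hWr
    exact Finset.mem_sdiff.2 ⟨hQ.subset_posSupport hr hi, fun hiD => hrD ⟨i, by simp [hi, hiD]⟩⟩
  exact ⟨p, q, hQ, hmeet p (by simp) hWp, hmeet q (by simp) hWq⟩

lemma IsCritical.exists_not_mem (hx : IsCritical 𝓗 x) (hM : IsPack 𝓗 x {w₁, w₂, w₃})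
    {u : V} (hu : x u = 1) : ∃ F ∈ 𝓗, IsUnitTransversal 𝓗 x F ∧ u ∉ F := by
  have hD : ∃ e ∈ 𝓗, e ⊆ posSupport x \ {u} := by
    by_cases huw : u ∈ w₁
    · exact ⟨w₂, hM.1 w₂ (by simp), hM.subset_posSupport_sdiff (by simp [huw, hu])⟩
    · exact ⟨w₁, hM.1 w₁ (by simp),
        Finset.subset_sdiff.2 ⟨hM.subset_posSupport (by simp), by simpa using huw⟩⟩
  obtain ⟨W, hW, hWx, hWt | ⟨p, q, hQ, ⟨a, ha⟩, ⟨b, hb⟩⟩⟩ := hx.exists_witness hD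
  · exact ⟨W, hW, hWt, fun huW => (Finset.mem_sdiff.1 (hWx huW)).2 (Finset.mem_singleton_self u)⟩
  · simp only [Finset.mem_inter, Finset.mem_singleton] at ha hb
    obtain ⟨ha, rfl⟩ := ha
    obtain ⟨hb, rfl⟩ := hb
    exact absurd hu (hQ.ne_one₂₃ ha hb)

structure IsFrame (𝓗 : Set (Finset V)) (x : V → ℕ) (w₁ w₂ w₃ : Finset V) (h₁ h₂ h₃ : V) :
    Prop where
  pack : IsPack 𝓗 x {w₁, w₂, w₃}
  mem₁ : h₁ ∈ w₁
  mem₂ : h₂ ∈ w₂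
  mem₃ : h₃ ∈ w₃
  transversal : IsUnitTransversal 𝓗 x {h₁, h₂, h₃}

lemma IsCritical.exists_frame (hx : IsCritical 𝓗 x) (hM : IsPack 𝓗 x {w₁, w₂, w₃}) :
    ∃ h₁ h₂ h₃, IsFrame 𝓗 x w₁ w₂ w₃ h₁ h₂ h₃ := by
  obtain ⟨H, hH, -, hHt | ⟨p, q, -, ⟨a, ha⟩, -⟩⟩ := hx.exists_witness (D := ∅)
    ⟨w₁, hM.1 w₁ (by simp), by simpa using hM.subset_posSupport (by simp)⟩
  · have hH3 := hx.card_le H hH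
    obtain ⟨h₁, hh₁, h₁w⟩ := hHt.exists_mem hM (w := w₁) (by simp)
    obtain ⟨h₂, hh₂, h₂w⟩ := hHt.exists_mem hM (w := w₂) (by simp)
    obtain ⟨h₃, hh₃, h₃w⟩ := hHt.exists_mem hM (w := w₃) (by simp)
    refine ⟨h₁, h₂, h₃, hM, h₁w, h₂w, h₃w, fun e he hex => ?_⟩
    obtain ⟨a, haH, hae, hax⟩ := hHt e he hex
    refine ⟨a, ?_, hae, hax⟩
    rcases hHt.eq_or_eq_or_eq hH3 hM ⟨hh₁, h₁w⟩ ⟨hh₂, h₂w⟩ ⟨hh₃, h₃w⟩ haH with rfl | rfl | rfl <;>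
      simp
  · simp at ha

namespace IsFrame

variable (hf : IsFrame 𝓗 x w₁ w₂ w₃ h₁ h₂ h₃)
include hf

lemma swap : IsFrame 𝓗 x w₁ w₃ w₂ h₁ h₃ h₂ :=
  ⟨hf.pack.swap₂₃, hf.mem₁, hf.mem₃, hf.mem₂, by rw [Finset.pair_comm]; exact hf.transversal⟩

lemma unit₁ : x h₁ = 1 := hf.transversal.unit Finset.card_le_three hf.pack (by simp)
lemma unit₂ : x h₂ = 1 := hf.transversal.unit Finset.card_le_three hf.pack (by simp)
lemma unit₃ : x h₃ = 1 := hf.transversal.unit Finset.card_le_three hf.pack (by simp)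

lemma cover {e : Finset V} (he : e ∈ 𝓗) (hex : e ⊆ posSupport x) : h₁ ∈ e ∨ h₂ ∈ e ∨ h₃ ∈ e := by
  obtain ⟨a, ha, hae, -⟩ := hf.transversal e he hex
  simp only [Finset.mem_insert, Finset.mem_singleton] at ha
  rcases ha with rfl | rfl | rfl <;> simp [hae]

lemma orient {Y s t : Finset V} (hQ : IsPack 𝓗 x {Y, s, t}) (h₁s : h₁ ∈ s) (h₁Y : h₁ ∉ Y) :
    (h₂ ∈ Y ∧ h₃ ∈ t) ∨ (h₃ ∈ Y ∧ h₂ ∈ t) := by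
  have hY := hf.cover (hQ.1 Y (by simp)) (hQ.subset_posSupport (by simp))
  have ht := hf.cover (hQ.1 t (by simp)) (hQ.subset_posSupport (by simp))
  have h₁t : h₁ ∉ t := fun h => hQ.ne_one₂₃ h₁s h hf.unit₁
  have h₂Yt : h₂ ∈ Y → h₂ ∉ t := fun hY ht => hQ.ne_one₁₃ hY ht hf.unit₂
  have h₃Yt : h₃ ∈ Y → h₃ ∉ t := fun hY ht => hQ.ne_one₁₃ hY ht hf.unit₃
  tauto

end IsFrame

/-- Otherwise `F` contains `h₃` and a coordinate of `w₂ ∩ p`, and a unit transversal avoiding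
`h₃` closes a square. -/
lemma IsFrame.inter_subset (hx : IsCritical 𝓗 x) (hf : IsFrame 𝓗 x w₁ w₂ w₃ h₁ h₂ h₃)
    {E p q : Finset V} (hQ : IsPack 𝓗 x {E, p, q}) (h₁p : h₁ ∈ p) (h₂q : h₂ ∈ q) (h₃E : h₃ ∈ E)
    (hE : ∀ a ∈ w₁, x a = 1 → a ∉ E) {F : Finset V} (hF : F ∈ 𝓗)
    (hFt : IsUnitTransversal 𝓗 x F) : F ∩ w₁ ⊆ p := by
  intro r hr
  obtain ⟨hrF, hrw⟩ := Finset.mem_inter.1 hr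
  by_contra hrp
  have hF3 := hx.card_le F hF
  have hrx := hFt.unit hF3 hf.pack hrF
  have hrq : r ∈ q := by
    rcases hFt.mem_triple hF3 hQ hrF with h | h | h
    exacts [absurd h (hE r hrw hrx), absurd h hrp, h]
  rcases hf.cover hF (hFt.subset_posSupport hF3 hf.pack) with h | h | h
  · exact hrp (hFt.eq_of_mem hF3 hf.pack (by simp) h hrF hf.mem₁ hrw ▸ h₁p)
  · obtain rfl := hFt.eq_of_mem hF3 hQ (by simp) h hrF h₂q hrq
    exact hf.pack.ne_one₁₂ hrw hf.mem₂ hrx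
  obtain ⟨f, hfF, hfp⟩ := hFt.exists_mem hQ (w := p) (by simp)
  have hfw : f ∈ w₂ := by
    rcases hFt.mem_triple hF3 hf.pack hfF with h' | h' | h'
    · exact absurd (hFt.eq_of_mem hF3 hf.pack (by simp) hfF hrF h' hrw ▸ hfp) hrp
    · exact h'
    · obtain rfl := hFt.eq_of_mem hF3 hf.pack (by simp) hfF h h' hf.mem₃
      exact absurd hf.unit₃ (hQ.ne_one₁₂ h₃E hfp)
  obtain ⟨G, hG, hGt, h₃G⟩ := hx.exists_not_mem hf.pack hf.unit₃
  have hG3 := hx.card_le G hG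
  have ha : h₁ ∈ G ∨ h₂ ∈ G := by
    rcases hf.cover hG (hGt.subset_posSupport hG3 hf.pack) with h' | h' | h'
    exacts [Or.inl h', Or.inr h', absurd h' h₃G]
  have hb : r ∈ G ∨ f ∈ G := by
    obtain ⟨g, hgG, hgF, -⟩ := hGt F hF (hFt.subset_posSupport hF3 hf.pack)
    rcases hFt.eq_or_eq_or_eq hF3 hf.pack ⟨hrF, hrw⟩ ⟨hfF, hfw⟩ ⟨h, hf.mem₃⟩ hgF with
      rfl | rfl | rfl
    exacts [Or.inl hgG, Or.inr hgG, absurd hgG h₃G]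
  exact hGt.false_of_square hG3 hf.pack hQ ⟨hf.mem₁, h₁p⟩ ⟨hf.mem₂, h₂q⟩ ⟨hrw, hrq⟩ ⟨hfw, hfp⟩
    ha hb

/-- `K` contains `h₂` and meets `u` inside `w₃`; a unit transversal avoiding `h₂` closes a
square. -/
lemma IsFrame.false_of_mem_of_not_mem (hx : IsCritical 𝓗 x)
    (hf : IsFrame 𝓗 x w₁ w₂ w₃ h₁ h₂ h₃) {X u v : Finset V} (hQ : IsPack 𝓗 x {X, u, v})
    (h₁u : h₁ ∈ u) (h₂X : h₂ ∈ X) (h₃v : h₃ ∈ v) {K : Finset V} (hK : K ∈ 𝓗)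
    (hKt : IsUnitTransversal 𝓗 x K) (h₁K : h₁ ∉ K) {s : V} (hsK : s ∈ K) (hsw : s ∈ w₁)
    (hsv : s ∈ v) : False := by
  have hK3 := hx.card_le K hK
  have hKx := hKt.subset_posSupport hK3 hf.pack
  have hsx := hKt.unit hK3 hf.pack hsK
  have h₂K : h₂ ∈ K := by
    rcases hf.cover hK hKx with h | h | h
    · exact absurd h h₁K
    · exact h
    · obtain rfl := hKt.eq_of_mem hK3 hQ (by simp) h hsK h₃v hsv
      exact absurd hsx (hf.pack.ne_one₁₃ hsw hf.mem₃)
  obtain ⟨d, hdK, hdu⟩ := hKt.exists_mem hQ (w := u) (by simp)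
  have hdw : d ∈ w₃ := by
    rcases hKt.mem_triple hK3 hf.pack hdK with h | h | h
    · obtain rfl := hKt.eq_of_mem hK3 hf.pack (by simp) hdK hsK h hsw
      exact absurd hsx (hQ.ne_one₂₃ hdu hsv)
    · obtain rfl := hKt.eq_of_mem hK3 hf.pack (by simp) hdK h₂K h hf.mem₂
      exact absurd hf.unit₂ (hQ.ne_one₁₂ h₂X hdu)
    · exact h
  obtain ⟨L, hL, hLt, h₂L⟩ := hx.exists_not_mem hf.pack hf.unit₂
  have hL3 := hx.card_le L hL
  have ha : h₁ ∈ L ∨ h₃ ∈ L := by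
    rcases hf.cover hL (hLt.subset_posSupport hL3 hf.pack) with h | h | h
    exacts [Or.inl h, absurd h h₂L, Or.inr h]
  have hb : s ∈ L ∨ d ∈ L := by
    obtain ⟨g, hgL, hgK, -⟩ := hLt K hK hKx
    rcases hKt.eq_or_eq_or_eq hK3 hf.pack ⟨hsK, hsw⟩ ⟨h₂K, hf.mem₂⟩ ⟨hdK, hdw⟩ hgK with
      rfl | rfl | rfl
    exacts [Or.inl hgL, absurd hgL h₂L, Or.inr hgL]
  exact hLt.false_of_square hL3 hf.swap.pack hQ ⟨hf.mem₁, h₁u⟩ ⟨hf.mem₃, h₃v⟩ ⟨hsw, hsv⟩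
    ⟨hdw, hdu⟩ ha hb

/-- Apply (*) to `supp x \ {h₁, s}`, where `s` is the `w₁`-coordinate of a unit transversal
avoiding `h₁`: a unit transversal there forces `w₁ ⊆ p`, and a packing there is oriented as in
`false_of_mem_of_not_mem`. -/
lemma IsFrame.false_of_oriented (hx : IsCritical 𝓗 x) (hf : IsFrame 𝓗 x w₁ w₂ w₃ h₁ h₂ h₃)
    {E p q : Finset V} (hQ : IsPack 𝓗 x {E, p, q}) (h₁p : h₁ ∈ p) (h₂q : h₂ ∈ q) (h₃E : h₃ ∈ E)
    (hE : ∀ a ∈ w₁, x a = 1 → a ∉ E) {c : V} (hcq : c ∈ q) (hcw : c ∈ w₁) (hcx : x c = 1) :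
    False := by
  obtain ⟨K, hK, hKt, h₁K⟩ := hx.exists_not_mem hf.pack hf.unit₁
  obtain ⟨s, hsK, hsw⟩ := hKt.exists_mem hf.pack (w := w₁) (by simp)
  have hsx := hKt.unit (hx.card_le K hK) hf.pack hsK
  have hsp : s ∈ p := hf.inter_subset hx hQ h₁p h₂q h₃E hE hK hKt (Finset.mem_inter.2 ⟨hsK, hsw⟩)
  obtain ⟨X, hX, hXx, hXt | ⟨u, v, hQ', hu, hv⟩⟩ := hx.exists_witness
    ⟨w₂, hf.pack.1 w₂ (by simp), hf.pack.subset_posSupport_sdiff (D := {h₁, s})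
      (by simp [hf.mem₁, hf.unit₁, hsw, hsx])⟩
  · obtain ⟨ξ, hξX, hξw⟩ := hXt.exists_mem hf.pack (w := w₁) (by simp)
    have hξp := hf.inter_subset hx hQ h₁p h₂q h₃E hE hX hXt (Finset.mem_inter.2 ⟨hξX, hξw⟩)
    have hξ : ξ ∉ ({h₁, s} : Finset V) := (Finset.mem_sdiff.1 (hXx hξX)).2
    simp only [Finset.mem_insert, Finset.mem_singleton, not_or] at hξ
    have hcard : ({h₁, s, ξ} : Finset V).card = 3 :=
      Finset.card_eq_three.2 ⟨h₁, s, ξ, fun h => h₁K (h ▸ hsK), Ne.symm hξ.1, Ne.symm hξ.2, rfl⟩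
    have hw₁ : ({h₁, s, ξ} : Finset V) = w₁ :=
      Finset.eq_of_subset_of_card_le (by simp [Finset.insert_subset_iff, hf.mem₁, hsw, hξw])
        (hcard ▸ hx.card_le w₁ (hf.pack.1 w₁ (by simp)))
    have hcp : c ∈ p := by
      rw [← hw₁] at hcw
      simp only [Finset.mem_insert, Finset.mem_singleton] at hcw
      rcases hcw with rfl | rfl | rfl <;> assumption
    exact hQ.ne_one₂₃ hcp hcq hcx
  have h₁X : h₁ ∉ X := fun h => (Finset.mem_sdiff.1 (hXx h)).2 (by simp)
  have key : ∀ u v : Finset V, IsPack 𝓗 x {X, u, v} → h₁ ∈ u → s ∈ v → False := by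
    intro u v hQ' h₁u hsv
    rcases hf.orient hQ' h₁u h₁X with ⟨h₂X, h₃v⟩ | ⟨h₃X, h₂v⟩
    · exact hf.false_of_mem_of_not_mem hx hQ' h₁u h₂X h₃v hK hKt h₁K hsK hsw hsv
    · exact hf.swap.false_of_mem_of_not_mem hx hQ' h₁u h₃X h₂v hK hKt h₁K hsK hsw hsv
  obtain ⟨a, ha⟩ := hu
  obtain ⟨b, hb⟩ := hv
  simp only [Finset.mem_inter, Finset.mem_insert, Finset.mem_singleton] at ha hb
  rcases ha with ⟨hau, rfl | rfl⟩ <;> rcases hb with ⟨hbv, rfl | rfl⟩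
  · exact hQ'.ne_one₂₃ hau hbv hf.unit₁
  · exact key u v hQ' hau hbv
  · exact key v u hQ'.swap₂₃ hbv hau
  · exact hQ'.ne_one₂₃ hau hbv hsx

/-- (*) on `supp x` gives a frame, and (*) on `supp x` minus the unit coordinates of `w₁` gives a
packing `{E, p, q}` that orients it. -/
theorem IsCritical.false (hx : IsCritical 𝓗 x) (hM : IsPack 𝓗 x {w₁, w₂, w₃}) : False := by
  obtain ⟨h₁, h₂, h₃, hf⟩ := hx.exists_frame hM
  obtain ⟨E, hE, hEx, hEcases⟩ := hx.exists_witness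
    ⟨w₂, hM.1 w₂ (by simp), hM.subset_posSupport_sdiff (D := w₁.filter (x · = 1))
      fun a ha => Finset.mem_filter.1 ha⟩
  have hE' : ∀ a ∈ w₁, x a = 1 → a ∉ E := fun a haw hax haE =>
    (Finset.mem_sdiff.1 (hEx haE)).2 (Finset.mem_filter.2 ⟨haw, hax⟩)
  rcases hEcases with hEt | ⟨p, q, hQ, hp, hq⟩
  · obtain ⟨a, haE, haw⟩ := hEt.exists_mem hM (w := w₁) (by simp)
    exact hE' a haw (hEt.unit (hx.card_le E hE) hM haE) haE
  have key : ∀ p q : Finset V, IsPack 𝓗 x {E, p, q} → h₁ ∈ p →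
      (q ∩ w₁.filter (x · = 1)).Nonempty → False := by
    rintro p q hQ h₁p ⟨c, hc⟩
    simp only [Finset.mem_inter, Finset.mem_filter] at hc
    rcases hf.orient hQ h₁p (hE' h₁ hf.mem₁ hf.unit₁) with ⟨h₂E, h₃q⟩ | ⟨h₃E, h₂q⟩
    · exact hf.swap.false_of_oriented hx hQ h₁p h₃q h₂E hE' hc.1 hc.2.1 hc.2.2
    · exact hf.false_of_oriented hx hQ h₁p h₂q h₃E hE' hc.1 hc.2.1 hc.2.2
  rcases hf.transversal.mem_triple Finset.card_le_three hQ
    (by simp : h₁ ∈ ({h₁, h₂, h₃} : Finset V)) with h | h | h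
  · exact hE' h₁ hf.mem₁ hf.unit₁ h
  · exact key p q hQ h hq
  · exact key q p hQ.swap₂₃ h hp

end Endgame

section Main

variable {V : Type*} [Fintype V] [DecidableEq V] {𝓗 : Set (Finset V)}

theorem exists_nimMove_nimTetris_eq (hne : ∀ H ∈ 𝓗, H.Nonempty)
    (hdim : ∀ H ∈ 𝓗, H.card ≤ 3) (hstar : CondStar 𝓗) {x : V → ℕ} {k : ℕ}
    (hk : k < nimTetris 𝓗 x) : ∃ y, nimMove 𝓗 x y ∧ nimTetris 𝓗 y = k := by
  by_contra hno
  have hgap : ∀ e ∈ 𝓗, e ⊆ posSupport x →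
      k < nimTetris 𝓗 (zeroOn x e) ∨ nimTetris 𝓗 (decOn x e) < k := fun e he hex => by
    by_contra h
    push Not at h
    exact hno (exists_nimMove_nimTetris_eq_of_le_of_le hne he hex h.1 h.2)
  obtain ⟨hT, rfl⟩ := nimTetris_eq_three_of_gap hne hdim hstar hk hgap
  obtain ⟨z, hz, hzc⟩ := exists_isPack_card_eq hne x
  obtain ⟨w₁, w₂, w₃, rfl⟩ := Multiset.card_eq_three.1 (hzc.trans hT)
  refine IsCritical.false ⟨hdim, hstar, fun e he hex => ?_⟩ hz
  rcases hgap e he hex with h | h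
  · exact Or.inr (exists_isPack_triple_of_two_le hne he hex h)
  · exact Or.inl (isUnitTransversal_of_nimTetris_decOn_eq_zero hne (by omega))

theorem isTetrisHypergraph_of_condStar (hne : ∀ H ∈ 𝓗, H.Nonempty)
    (hdim : ∀ H ∈ 𝓗, H.card ≤ 3) (hstar : CondStar 𝓗) : IsTetrisHypergraph 𝓗 := by
  have hsg : sgFun (nimMove 𝓗) = nimTetris 𝓗 :=
    sgFun_eq_tetrisFun (wellFounded_nimMove hne) finite_nimMove fun _ _ hk =>
      exists_nimMove_nimTetris_eq hne hdim hstar hk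
  intro x y hxy
  rw [hsg]
  exact nimTetris_lt hne hxy

theorem condStar_of_isTetrisHypergraph (hne : ∀ H ∈ 𝓗, H.Nonempty)
    (htet : IsTetrisHypergraph 𝓗) : CondStar 𝓗 := by
  rintro S ⟨H₀, hH₀, hH₀S⟩
  by_contra hcon
  push Not at hcon
  set x : V → ℕ := fun i => if i ∈ S then 1 else 0 with hx
  have hpos : ∀ y, (∃ H ∈ 𝓗, H ⊆ posSupport y) → 0 < sgFun (nimMove 𝓗) y :=
    fun y ⟨H, hH, hHy⟩ => (Nat.zero_le _).trans_lt (htet y _ (nimMove_decOn hH hHy))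
  have hxS : posSupport x = S := by
    ext i
    by_cases hi : i ∈ S <;> simp [posSupport, hx, hi]
  have h0 : sgFun (nimMove 𝓗) x = 0 := by
    refine sgFun_eq_zero (wellFounded_nimMove hne) fun y ⟨H, hH, hlt, heq⟩ => (hpos y ?_).ne'
    have hHS : H ⊆ S := fun i hi => by
      have := hlt i hi
      by_contra hiS
      simp [hx, hiS] at this
    obtain ⟨H', hH', hH'S, hdisj⟩ := hcon H hH hHS
    refine ⟨H', hH', subset_posSupport_iff.2 fun i hi => ?_⟩
    have hiH : i ∉ H := fun h => Finset.notMem_empty i (hdisj ▸ Finset.mem_inter.2 ⟨h, hi⟩)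
    simp [heq i hiH, hx, hH'S hi]
  exact (hpos x ⟨H₀, hH₀, hxS ▸ hH₀S⟩).ne' h0

end Main

theorem stmt4 {V : Type*} [Fintype V] [DecidableEq V]
    (𝓗 : Set (Finset V)) (hne : ∀ H ∈ 𝓗, H.Nonempty)
    (hdim : ∀ H ∈ 𝓗, H.card ≤ 3) :
    IsTetrisHypergraph 𝓗 ↔ CondStar 𝓗 :=
  ⟨condStar_of_isTetrisHypergraph hne, isTetrisHypergraph_of_condStar hne hdim⟩
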